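/- For each integer k ≥ 0 and each sign ν ∈ {+,-}, the nodal set T_k^ν is open in C²[-1,1], and the sets T_k^ν for distinct (k,ν) are pairwise disjoint. -/
import Mathlib

open Set

private lemma sign_change_zero {f : ℝ → ℝ} {a b : ℝ} (hab : a < b)
    (hc : ContinuousOn f (Set.Icc a b)) (h : f a * f b < 0) :
    ∃ z ∈ Set.Ioo a b, f z = 0 := by
  rcases lt_or_ge (f a) 0 with h1 | h1
  · have h2 : 0 < f b := by nlinarith
    obtain ⟨z, hz, hz0⟩ := intermediate_value_Ioo hab.le hc (show (0:ℝ) ∈ Set.Ioo (f a) (f b) from ⟨h1, h2⟩)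
    exact ⟨z, hz, hz0⟩
  · have h1' : 0 < f a := lt_of_le_of_ne h1 (fun hz => by rw [← hz] at h; simp at h)
    have h2 : f b < 0 := by nlinarith
    obtain ⟨z, hz, hz0⟩ := intermediate_value_Ioo' hab.le hc (show (0:ℝ) ∈ Set.Ioo (f b) (f a) from ⟨h2, h1'⟩)
    exact ⟨z, hz, hz0⟩

private lemma key_interval {f : ℝ → ℝ} {a b : ℝ} (hab : a < b)
    (hcont : ContinuousOn f (Set.Icc a b))
    (hpos : ∀ x ∈ Set.Ioo a b, 0 < deriv f x)
    (ha : f a < 0) (hb : 0 < f b) :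
    (∃ y ∈ Set.Ioo a b, f y = 0) ∧
      ∀ y ∈ Set.Icc a b, f y = 0 → ∀ z ∈ Set.Icc a b, f z = 0 → y = z := by
  have hmono : StrictMonoOn f (Set.Icc a b) :=
    strictMonoOn_of_deriv_pos (convex_Icc a b) hcont (by rwa [interior_Icc])
  constructor
  · obtain ⟨z, hz, hz0⟩ := intermediate_value_Ioo hab.le hcont (show (0:ℝ) ∈ Set.Ioo (f a) (f b) from ⟨ha, hb⟩)
    exact ⟨z, hz, hz0⟩
  · intro y hy hy0 z hz hz0
    exact hmono.injOn hy hz (hy0.trans hz0.symm)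

private lemma cont_diff_derivs {v : ℝ → ℝ} (hv : ContDiffOn ℝ 2 v (Set.Icc (-1:ℝ) 1)) :
    ContDiffOn ℝ 1 (deriv v) (Set.Ioo (-1:ℝ) 1) :=
  (hv.mono Set.Ioo_subset_Icc_self).deriv_of_isOpen isOpen_Ioo (by norm_num)

private lemma contOn_deriv_Icc {v : ℝ → ℝ} (hv : ContDiffOn ℝ 2 v (Set.Icc (-1:ℝ) 1))
    (h1 : DifferentiableAt ℝ v (-1)) (h2 : DifferentiableAt ℝ v 1) :
    ContinuousOn (deriv v) (Set.Icc (-1:ℝ) 1) := by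
  have hone : (-1:ℝ) < 1 := by norm_num
  have hud : UniqueDiffOn ℝ (Set.Icc (-1:ℝ) 1) := uniqueDiffOn_Icc hone
  refine (hv.continuousOn_derivWithin hud one_le_two).congr ?_
  intro x hx
  rcases hx.1.eq_or_lt with he | hl
  · rw [← he]; exact (h1.derivWithin (hud _ (by rw [← he] at hx; exact hx))).symm
  rcases hx.2.eq_or_lt with he | hr
  · rw [he]; exact (h2.derivWithin (hud _ (by rw [he] at hx; exact hx))).symm
  · exact (derivWithin_of_mem_nhds (Icc_mem_nhds hl hr)).symm

private lemma crossing {u : ℝ → ℝ} {w : ℝ} (hw : DifferentiableAt ℝ u w) (h0 : u w = 0)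
    (hd : deriv u w ≠ 0) {p q : ℝ} (hpw : p < w) (hwq : w < q) :
    ∃ a b : ℝ, p < a ∧ a < b ∧ b < q ∧ u a * u b < 0 := by
  have hds : Filter.Tendsto (slope u w) (nhdsWithin w {w}ᶜ) (nhds (deriv u w)) :=
    hasDerivAt_iff_tendsto_slope.1 hw.hasDerivAt
  have hopen : IsOpen {y : ℝ | 0 < y * deriv u w} := by
    have : Continuous fun y : ℝ => y * deriv u w := by continuity
    exact isOpen_lt continuous_const this
  have hmem : {y : ℝ | 0 < y * deriv u w} ∈ nhds (deriv u w) :=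
    hopen.mem_nhds (by simp only [Set.mem_setOf_eq]; exact mul_self_pos.mpr hd)
  have hev : slope u w ⁻¹' {y | 0 < y * deriv u w} ∈ nhdsWithin w {w}ᶜ :=
    Filter.mem_map.mp (hds hmem)
  rw [Metric.mem_nhdsWithin_iff] at hev
  obtain ⟨δ, hδpos, hδ⟩ := hev
  set a := max (w - δ/2) ((p+w)/2) with hadef
  set b := min (w + δ/2) ((w+q)/2) with hbdef
  have haw : a < w := max_lt (by linarith) (by linarith)
  have hwb : w < b := lt_min (by linarith) (by linarith)
  have hpa : p < a := lt_of_lt_of_le (by linarith : p < (p+w)/2) (le_max_right _ _)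
  have hbq : b < q := lt_of_le_of_lt (min_le_right _ _) (by linarith)
  have haball : a ∈ Metric.ball w δ ∩ {w}ᶜ := by
    refine ⟨?_, fun h => absurd (Set.mem_singleton_iff.mp h) (ne_of_lt haw)⟩
    rw [Metric.mem_ball, Real.dist_eq, abs_lt]
    have : w - δ/2 ≤ a := le_max_left _ _
    constructor <;> linarith
  have hbball : b ∈ Metric.ball w δ ∩ {w}ᶜ := by
    refine ⟨?_, fun h => absurd (Set.mem_singleton_iff.mp h) (ne_of_gt hwb)⟩
    rw [Metric.mem_ball, Real.dist_eq, abs_lt]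
    have : b ≤ w + δ/2 := min_le_left _ _
    constructor <;> linarith
  have hsa := hδ haball
  have hsb := hδ hbball
  simp only [Set.mem_preimage, Set.mem_setOf_eq] at hsa hsb
  refine ⟨a, b, hpa, haw.trans hwb, hbq, ?_⟩
  have hua : u a = slope u w a * (a - w) := by
    rw [slope_def_field, h0, sub_zero, div_mul_cancel₀ _ (sub_ne_zero.mpr (ne_of_lt haw))]
  have hub : u b = slope u w b * (b - w) := by
    rw [slope_def_field, h0, sub_zero, div_mul_cancel₀ _ (sub_ne_zero.mpr (ne_of_gt hwb))]
  rcases hd.lt_or_gt with h | h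
  · have hsa' : slope u w a < 0 := by nlinarith
    have hsb' : slope u w b < 0 := by nlinarith
    rw [hua, hub]
    exact mul_neg_of_pos_of_neg (mul_pos_of_neg_of_neg hsa' (by linarith)) (mul_neg_of_neg_of_pos hsb' (by linarith))
  · have hsa' : 0 < slope u w a := by nlinarith
    have hsb' : 0 < slope u w b := by nlinarith
    rw [hua, hub]
    exact mul_neg_of_neg_of_pos (mul_neg_of_pos_of_neg hsa' (by linarith)) (mul_pos hsb' (by linarith))



/-- The nodal set `T_k^+` in `C²[-1,1]`. -/
def TPlus (k : ℕ) (u : ℝ → ℝ) : Prop :=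
  ContDiffOn ℝ 2 u (Set.Icc (-1 : ℝ) 1) ∧
  deriv u (-1) ≠ 0 ∧ deriv u 1 ≠ 0 ∧ 0 < deriv u (-1) ∧
  (∀ x ∈ Set.Ioo (-1 : ℝ) 1, deriv u x = 0 → deriv (deriv u) x ≠ 0) ∧
  {x ∈ Set.Ioo (-1 : ℝ) 1 | deriv u x = 0}.Finite ∧
  {x ∈ Set.Ioo (-1 : ℝ) 1 | deriv u x = 0}.ncard = k ∧
  (∀ x ∈ Set.Ioo (-1 : ℝ) 1, ∀ y ∈ Set.Ioo (-1 : ℝ) 1,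
    x < y → deriv u x = 0 → deriv u y = 0 →
    (∀ z ∈ Set.Ioo x y, deriv u z ≠ 0) → ∃ z ∈ Set.Ioo x y, u z = 0)

/-- `T_k^ν`, where `ν = true` is `+` and `ν = false` is `-` (`T_k^- = -T_k^+`). -/
def TNodal (k : ℕ) (ν : Bool) (u : ℝ → ℝ) : Prop :=
  if ν then TPlus k u else TPlus k (-u)

set_option maxHeartbeats 3200000 in
private lemma tplus_open (k : ℕ) (u : ℝ → ℝ) (hu : TPlus k u) :
    ∃ ε > 0, ∀ v : ℝ → ℝ, ContDiffOn ℝ 2 v (Set.Icc (-1 : ℝ) 1) →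
      (∀ x ∈ Set.Icc (-1 : ℝ) 1,
        |v x - u x| < ε ∧ |deriv v x - deriv u x| < ε ∧
        |deriv (deriv v) x - deriv (deriv u) x| < ε) →
      TPlus k v := by
  classical
  obtain ⟨hC2, hm1, hp1, hposm1, hsimple, hfin, hcard, hbetween⟩ := hu
  set S : Set ℝ := {x ∈ Set.Ioo (-1:ℝ) 1 | deriv u x = 0} with hSdef
  have hSsub : S ⊆ Set.Ioo (-1:ℝ) 1 := fun x hx => hx.1
  have hIoo : (Set.Ioo (-1:ℝ) 1) ⊆ Set.Icc (-1:ℝ) 1 := Set.Ioo_subset_Icc_self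
  have hdu : ContDiffOn ℝ 1 (deriv u) (Set.Ioo (-1:ℝ) 1) := cont_diff_derivs hC2
  have hcont1 : ContinuousOn (deriv u) (Set.Ioo (-1:ℝ) 1) := hdu.continuousOn
  have hcont2 : ContinuousOn (deriv (deriv u)) (Set.Ioo (-1:ℝ) 1) :=
    hdu.continuousOn_deriv_of_isOpen isOpen_Ioo le_rfl
  have hdiffm1 : DifferentiableAt ℝ u (-1) := by
    by_contra h; exact hm1 (deriv_zero_of_not_differentiableAt h)
  have hdiffp1 : DifferentiableAt ℝ u 1 := by
    by_contra h; exact hp1 (deriv_zero_of_not_differentiableAt h)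
  have hcontIcc : ContinuousOn (deriv u) (Set.Icc (-1:ℝ) 1) := contOn_deriv_Icc hC2 hdiffm1 hdiffp1
  have hdiffIoo : ∀ w ∈ Set.Ioo (-1:ℝ) 1, DifferentiableAt ℝ u w := fun w hw =>
    (hC2.differentiableOn (by norm_num)).differentiableAt (Icc_mem_nhds hw.1 hw.2)
  -- Finset versions
  set Sfin : Finset ℝ := hfin.toFinset with hSfin
  have hmemS : ∀ x, x ∈ Sfin ↔ x ∈ S := fun x => hfin.mem_toFinset
  -- minimal gap η₀
  set F : Finset ℝ := insert (-1:ℝ) (insert (1:ℝ) Sfin) with hF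
  set D : Finset ℝ := ((F ×ˢ F).filter fun pq => pq.1 ≠ pq.2).image fun pq => |pq.1 - pq.2| with hD
  have hDne : D.Nonempty := by
    refine ⟨2, ?_⟩
    rw [hD, Finset.mem_image]
    refine ⟨(-1, 1), ?_, by norm_num⟩
    rw [Finset.mem_filter, Finset.mem_product]
    exact ⟨⟨Finset.mem_insert_self _ _, Finset.mem_insert_of_mem (Finset.mem_insert_self _ _)⟩, by norm_num⟩
  set η₀ : ℝ := D.min' hDne with hη₀def
  have hDpos : ∀ x ∈ D, 0 < x := by
    intro x hx
    rw [hD, Finset.mem_image] at hx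
    obtain ⟨pq, hpq, rfl⟩ := hx
    rw [Finset.mem_filter] at hpq
    exact abs_pos.mpr (sub_ne_zero.mpr hpq.2)
  have hη₀pos : 0 < η₀ := hDpos _ (D.min'_mem hDne)
  have hη₀le : ∀ p ∈ F, ∀ q ∈ F, p ≠ q → η₀ ≤ |p - q| := by
    intro p hp q hq hne
    refine D.min'_le _ ?_
    rw [hD, Finset.mem_image]
    exact ⟨(p, q), by rw [Finset.mem_filter, Finset.mem_product]; exact ⟨⟨hp, hq⟩, hne⟩, rfl⟩
  have hSF : ∀ p ∈ S, p ∈ F := fun p hp => by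
    rw [hF]
    exact Finset.mem_insert_of_mem (Finset.mem_insert_of_mem ((hmemS p).mpr hp))
  -- local radius around each critical point
  have hrex : ∀ p : ℝ, ∃ r : ℝ, 0 < r ∧ (p ∈ S →
      ∀ x : ℝ, |x - p| ≤ r → x ∈ Set.Ioo (-1:ℝ) 1 ∧
        |deriv (deriv u) x - deriv (deriv u) p| < |deriv (deriv u) p| / 2) := by
    intro p
    by_cases hp : p ∈ S
    · have hpI : p ∈ Set.Ioo (-1:ℝ) 1 := hSsub hp
      have hd2 : deriv (deriv u) p ≠ 0 := hsimple p hpI hp.2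
      have hc : ContinuousAt (deriv (deriv u)) p := hcont2.continuousAt (isOpen_Ioo.mem_nhds hpI)
      rw [Metric.continuousAt_iff] at hc
      obtain ⟨δ₁, hδ₁, hball⟩ := hc (|deriv (deriv u) p| / 2) (by positivity)
      obtain ⟨δ₂, hδ₂, hball2⟩ := Metric.isOpen_iff.mp isOpen_Ioo p hpI
      refine ⟨min δ₁ δ₂ / 2, by positivity, fun _ x hx => ?_⟩
      have hx1 : dist x p < δ₁ := by
        rw [Real.dist_eq]
        have := min_le_left δ₁ δ₂; linarith
      have hx2 : dist x p < δ₂ := by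
        rw [Real.dist_eq]
        have := min_le_right δ₁ δ₂; linarith
      exact ⟨hball2 hx2, by rw [← Real.dist_eq]; exact hball hx1⟩
    · exact ⟨1, one_pos, fun h => absurd h hp⟩
  choose r hrpos hrprop using hrex
  -- sign of the second derivative
  set σ : ℝ → ℝ := fun p => if 0 < deriv (deriv u) p then 1 else -1 with hσdef
  have hσcases : ∀ p, σ p = 1 ∨ σ p = -1 := by
    intro p
    rw [hσdef]
    by_cases h : 0 < deriv (deriv u) p
    · left; simp [h]
    · right; simp [h]
  have hσm : ∀ p ∈ S, ∀ x : ℝ, |x - p| ≤ r p →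
      |deriv (deriv u) p| / 2 < σ p * deriv (deriv u) x := by
    intro p hp x hx
    have hb := (hrprop p hp x hx).2
    rw [abs_lt] at hb
    have hd2 : deriv (deriv u) p ≠ 0 := hsimple p (hSsub hp) hp.2
    simp only [hσdef]
    by_cases h : 0 < deriv (deriv u) p
    · rw [if_pos h, one_mul]; rw [abs_of_pos h] at hb ⊢; linarith
    · have hneg : deriv (deriv u) p < 0 := lt_of_le_of_ne (not_lt.mp h) hd2
      rw [if_neg h]; rw [abs_of_neg hneg] at hb ⊢; linarith
  -- pair data
  set Cond : ℝ → ℝ → Prop := fun p q => p ∈ S ∧ q ∈ S ∧ p < q ∧ ∀ z ∈ Set.Ioo p q, deriv u z ≠ 0 with hConddef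
  have hpairex : ∀ p q : ℝ, ∃ a b : ℝ, Cond p q → p < a ∧ a < b ∧ b < q ∧ u a * u b < 0 := by
    intro p q
    by_cases hc : Cond p q
    · obtain ⟨hp, hq, hpq, hnz⟩ := hc
      obtain ⟨w, hw, hw0⟩ := hbetween p (hSsub hp) q (hSsub hq) hpq hp.2 hq.2 hnz
      have hwI : w ∈ Set.Ioo (-1:ℝ) 1 := ⟨lt_trans (hSsub hp).1 hw.1, lt_trans hw.2 (hSsub hq).2⟩
      have hdw : deriv u w ≠ 0 := hnz w hw
      obtain ⟨a, b, h1, h2, h3, h4⟩ := crossing (hdiffIoo w hwI) hw0 hdw hw.1 hw.2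
      exact ⟨a, b, fun _ => ⟨h1, h2, h3, h4⟩⟩
    · exact ⟨0, 0, fun h => absurd h hc⟩
  choose pa pb hpair using hpairex
  -- choice of η
  set gfun : ℝ × ℝ → ℝ := fun pq => if Cond pq.1 pq.2 then min (pa pq.1 pq.2 - pq.1) (pq.2 - pb pq.1 pq.2) else 1 with hgfun
  set C : Finset ℝ := insert (η₀ / 3) (Sfin.image r ∪ (Sfin ×ˢ Sfin).image gfun) with hC
  have hCne : C.Nonempty := ⟨η₀ / 3, Finset.mem_insert_self _ _⟩
  set η : ℝ := C.min' hCne with hηdef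
  have hCpos : ∀ x ∈ C, 0 < x := by
    intro x hx
    rw [hC, Finset.mem_insert, Finset.mem_union, Finset.mem_image, Finset.mem_image] at hx
    rcases hx with h | ⟨p, _, rfl⟩ | ⟨pq, _, rfl⟩
    · rw [h]; positivity
    · exact hrpos p
    · simp only [hgfun]
      by_cases hc : Cond pq.1 pq.2
      · rw [if_pos hc]
        obtain ⟨h1, h2, h3, _⟩ := hpair pq.1 pq.2 hc
        exact lt_min (by linarith) (by linarith)
      · rw [if_neg hc]; norm_num
  have hηpos : 0 < η := hCpos _ (C.min'_mem hCne)
  have hηη₀ : η ≤ η₀ / 3 := C.min'_le _ (Finset.mem_insert_self _ _)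
  have hηr : ∀ p ∈ S, η ≤ r p := fun p hp =>
    C.min'_le _ (Finset.mem_insert_of_mem (Finset.mem_union_left _ (Finset.mem_image_of_mem r ((hmemS p).mpr hp))))
  have hηg : ∀ p q : ℝ, Cond p q → η ≤ min (pa p q - p) (q - pb p q) := by
    intro p q hc
    have heq : gfun (p, q) = min (pa p q - p) (q - pb p q) := by simp only [hgfun]; rw [if_pos hc]
    rw [← heq]
    refine C.min'_le _ (Finset.mem_insert_of_mem (Finset.mem_union_right _ ?_))
    exact Finset.mem_image_of_mem gfun (Finset.mem_product.mpr ⟨(hmemS _).mpr hc.1, (hmemS _).mpr hc.2.1⟩)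
  -- interval facts
  have hJsub : ∀ p ∈ S, Set.Icc (p - η) (p + η) ⊆ Set.Ioo (-1:ℝ) 1 := by
    intro p hp x hx
    refine (hrprop p hp x ?_).1
    rw [abs_le]
    have h1 := hηr p hp
    exact ⟨by linarith [hx.1], by linarith [hx.2]⟩
  have hsep : ∀ p ∈ S, ∀ q ∈ S, p ≠ q → 3 * η ≤ |p - q| := by
    intro p hp q hq hne
    have := hη₀le p (hSF p hp) q (hSF q hq) hne
    linarith
  have hJ2 : ∀ p ∈ S, ∀ x ∈ Set.Icc (p - η) (p + η),
      |deriv (deriv u) p| / 2 < σ p * deriv (deriv u) x := by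
    intro p hp x hx
    refine hσm p hp x ?_
    rw [abs_le]
    have := hηr p hp
    exact ⟨by linarith [hx.1], by linarith [hx.2]⟩
  have hmpos : ∀ p ∈ S, 0 < |deriv (deriv u) p| / 2 := by
    intro p hp
    have := hsimple p (hSsub hp) hp.2
    positivity
  -- u' is strictly monotone (after sign flip) on each interval
  have hmonoU : ∀ p ∈ S, StrictMonoOn (fun x => σ p * deriv u x) (Set.Icc (p - η) (p + η)) := by
    intro p hp
    refine strictMonoOn_of_deriv_pos (convex_Icc _ _) (continuousOn_const.mul (hcont1.mono ((hJsub p hp)))) ?_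
    intro x hx
    rw [interior_Icc] at hx
    rw [deriv_const_mul_field]
    exact lt_trans (hmpos p hp) (hJ2 p hp x (Set.Ioo_subset_Icc_self hx))
  have hpJ : ∀ p ∈ S, p ∈ Set.Icc (p - η) (p + η) := fun p _ => ⟨by linarith, by linarith⟩
  have hUleft : ∀ p ∈ S, σ p * deriv u (p - η) < 0 := by
    intro p hp
    have h := hmonoU p hp (Set.left_mem_Icc.mpr (by linarith)) (hpJ p hp) (by linarith)
    simpa [hp.2] using h
  have hUright : ∀ p ∈ S, 0 < σ p * deriv u (p + η) := by
    intro p hp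
    have h := hmonoU p hp (hpJ p hp) (Set.right_mem_Icc.mpr (by linarith)) (by linarith)
    simpa [hp.2] using h
  -- the compact complement and its minimum
  set U : Set ℝ := ⋃ p ∈ S, Set.Ioo (p - η) (p + η) with hUdef
  set K : Set ℝ := Set.Icc (-1:ℝ) 1 \ U with hKdef
  have hUopen : IsOpen U := isOpen_biUnion fun p _ => isOpen_Ioo
  have hKcomp : IsCompact K := isCompact_Icc.diff hUopen
  have hKne : K.Nonempty := by
    refine ⟨-1, Set.left_mem_Icc.mpr (by norm_num), fun h => ?_⟩
    rw [hUdef, Set.mem_iUnion₂] at h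
    obtain ⟨p, hp, hmem⟩ := h
    have h2 := (hJsub p hp (Set.left_mem_Icc.mpr (by linarith))).1
    have := hmem.1
    linarith
  have hKnz : ∀ x ∈ K, deriv u x ≠ 0 := by
    intro x hx h0
    rcases hx.1.1.eq_or_lt with he | hl
    · exact hm1 (by rw [he]; exact h0)
    rcases hx.1.2.eq_or_lt with he | hr
    · exact hp1 (by rw [he] at h0; exact h0)
    have hxS : x ∈ S := ⟨⟨hl, hr⟩, h0⟩
    exact hx.2 (Set.mem_iUnion₂.mpr ⟨x, hxS, by constructor <;> linarith⟩)
  obtain ⟨x₀, hx₀K, hx₀min⟩ := hKcomp.exists_isMinOn hKne ((hcontIcc.mono Set.diff_subset).abs)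
  rw [isMinOn_iff] at hx₀min
  set δ : ℝ := |deriv u x₀| with hδdef
  have hδpos : 0 < δ := abs_pos.mpr (hKnz x₀ hx₀K)
  have hδle : ∀ x ∈ K, δ ≤ |deriv u x| := fun x hx => hx₀min x hx
  -- choice of ε
  set efun : ℝ × ℝ → ℝ := fun pq => if Cond pq.1 pq.2 then min |u (pa pq.1 pq.2)| |u (pb pq.1 pq.2)| else 1 with hefun
  set mfun : ℝ → ℝ := fun p => |deriv (deriv u) p| / 2 with hmfun
  set lfun : ℝ → ℝ := fun p => |deriv u (p - η)| with hlfun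
  set rfunn : ℝ → ℝ := fun p => |deriv u (p + η)| with hrfunn
  set E : Finset ℝ := insert δ (insert (deriv u (-1)) (insert |deriv u 1|
      (((Sfin.image mfun ∪ Sfin.image lfun) ∪ Sfin.image rfunn) ∪ (Sfin ×ˢ Sfin).image efun))) with hE
  have hEne : E.Nonempty := ⟨δ, Finset.mem_insert_self _ _⟩
  set ε : ℝ := E.min' hEne with hεdef
  have hσnz : ∀ p, σ p ≠ 0 := by
    intro p
    rcases hσcases p with h | h <;> rw [h] <;> norm_num
  have hEpos : ∀ x ∈ E, 0 < x := by
    intro x hx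
    rw [hE] at hx
    simp only [Finset.mem_insert, Finset.mem_union, Finset.mem_image] at hx
    rcases hx with h | h | h | ⟨⟨⟨p, hp, rfl⟩ | ⟨p, hp, rfl⟩⟩ | ⟨p, hp, rfl⟩⟩ | ⟨pq, hpq, rfl⟩
    · rw [h]; exact hδpos
    · rw [h]; exact hposm1
    · rw [h]; exact abs_pos.mpr hp1
    · exact hmpos p ((hmemS p).mp hp)
    · simp only [hlfun]
      refine abs_pos.mpr (fun h0 => ?_)
      have := hUleft p ((hmemS p).mp hp)
      rw [h0, mul_zero] at this
      exact lt_irrefl 0 this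
    · simp only [hrfunn]
      refine abs_pos.mpr (fun h0 => ?_)
      have := hUright p ((hmemS p).mp hp)
      rw [h0, mul_zero] at this
      exact lt_irrefl 0 this
    · simp only [hefun]
      by_cases hc : Cond pq.1 pq.2
      · rw [if_pos hc]
        obtain ⟨_, _, _, h4⟩ := hpair pq.1 pq.2 hc
        refine lt_min (abs_pos.mpr fun h0 => ?_) (abs_pos.mpr fun h0 => ?_)
        · rw [h0, zero_mul] at h4; exact lt_irrefl 0 h4
        · rw [h0, mul_zero] at h4; exact lt_irrefl 0 h4
      · rw [if_neg hc]; norm_num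
  have hεpos : 0 < ε := hEpos _ (E.min'_mem hEne)
  have hεδ : ε ≤ δ := E.min'_le _ (Finset.mem_insert_self _ _)
  have hεm1 : ε ≤ deriv u (-1) :=
    E.min'_le _ (Finset.mem_insert_of_mem (Finset.mem_insert_self _ _))
  have hεp1 : ε ≤ |deriv u 1| :=
    E.min'_le _ (Finset.mem_insert_of_mem (Finset.mem_insert_of_mem (Finset.mem_insert_self _ _)))
  have hεmem : ∀ y ∈ (((Sfin.image mfun ∪ Sfin.image lfun) ∪ Sfin.image rfunn) ∪ (Sfin ×ˢ Sfin).image efun), ε ≤ y := by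
    intro y hy
    exact E.min'_le _ (Finset.mem_insert_of_mem (Finset.mem_insert_of_mem (Finset.mem_insert_of_mem hy)))
  have hεm : ∀ p ∈ S, ε ≤ |deriv (deriv u) p| / 2 := by
    intro p hp
    exact hεmem _ (Finset.mem_union_left _ (Finset.mem_union_left _ (Finset.mem_union_left _ (Finset.mem_image_of_mem mfun ((hmemS p).mpr hp)))))
  have hεl : ∀ p ∈ S, ε ≤ |deriv u (p - η)| := by
    intro p hp
    exact hεmem _ (Finset.mem_union_left _ (Finset.mem_union_left _ (Finset.mem_union_right _ (Finset.mem_image_of_mem lfun ((hmemS p).mpr hp)))))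
  have hεr : ∀ p ∈ S, ε ≤ |deriv u (p + η)| := by
    intro p hp
    exact hεmem _ (Finset.mem_union_left _ (Finset.mem_union_right _ (Finset.mem_image_of_mem rfunn ((hmemS p).mpr hp))))
  have hεe : ∀ p q : ℝ, Cond p q → ε ≤ min |u (pa p q)| |u (pb p q)| := by
    intro p q hc
    have heq : efun (p, q) = min |u (pa p q)| |u (pb p q)| := by simp only [hefun]; rw [if_pos hc]
    rw [← heq]
    exact hεmem _ (Finset.mem_union_right _ (Finset.mem_image_of_mem efun (Finset.mem_product.mpr ⟨(hmemS _).mpr hc.1, (hmemS _).mpr hc.2.1⟩)))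
  refine ⟨ε, hεpos, ?_⟩
  intro v hv hclose
  -- basic facts about v
  have hclose1 : ∀ x ∈ Set.Icc (-1:ℝ) 1, |v x - u x| < ε := fun x hx => (hclose x hx).1
  have hclose2 : ∀ x ∈ Set.Icc (-1:ℝ) 1, |deriv v x - deriv u x| < ε := fun x hx => (hclose x hx).2.1
  have hclose3 : ∀ x ∈ Set.Icc (-1:ℝ) 1, |deriv (deriv v) x - deriv (deriv u) x| < ε := fun x hx => (hclose x hx).2.2
  have hm1mem : (-1:ℝ) ∈ Set.Icc (-1:ℝ) 1 := Set.left_mem_Icc.mpr (by norm_num)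
  have hp1mem : (1:ℝ) ∈ Set.Icc (-1:ℝ) 1 := Set.right_mem_Icc.mpr (by norm_num)
  have hvm1 : 0 < deriv v (-1) := by
    have h := hclose2 _ hm1mem
    rw [abs_lt] at h
    linarith
  have hvp1 : deriv v 1 ≠ 0 := by
    intro h0
    have h := hclose2 _ hp1mem
    rw [h0, zero_sub, abs_neg] at h
    linarith
  have hvd : ContDiffOn ℝ 1 (deriv v) (Set.Ioo (-1:ℝ) 1) := cont_diff_derivs hv
  have hvcont1 : ContinuousOn (deriv v) (Set.Ioo (-1:ℝ) 1) := hvd.continuousOn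
  -- second derivative of v is positive (after sign flip) on each interval
  have hvA : ∀ p ∈ S, ∀ x ∈ Set.Icc (p - η) (p + η), 0 < σ p * deriv (deriv v) x := by
    intro p hp x hx
    have h1 := hJ2 p hp x hx
    have h2 := hclose3 x (hIoo (hJsub p hp hx))
    have h3 := hεm p hp
    have h4 : σ p * deriv (deriv v) x ≥ σ p * deriv (deriv u) x - |deriv (deriv v) x - deriv (deriv u) x| := by
      rcases hσcases p with h | h <;> rw [h] <;>
        rcases abs_cases (deriv (deriv v) x - deriv (deriv u) x) with ⟨h5, _⟩ | ⟨h5, _⟩ <;> linarith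
    linarith
  -- exactly one zero of v' in each interval
  have hyex : ∀ p : ℝ, ∃ yp : ℝ, p ∈ S → yp ∈ Set.Ioo (p - η) (p + η) ∧ deriv v yp = 0 ∧
      ∀ z ∈ Set.Icc (p - η) (p + η), deriv v z = 0 → z = yp := by
    intro p
    by_cases hp : p ∈ S
    · have hab : p - η < p + η := by linarith
      have hconts : ContinuousOn (fun x => σ p * deriv v x) (Set.Icc (p - η) (p + η)) :=
        continuousOn_const.mul (hvcont1.mono (hJsub p hp))
      have hder : ∀ x ∈ Set.Ioo (p - η) (p + η), 0 < deriv (fun x => σ p * deriv v x) x := by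
        intro x hx
        rw [deriv_const_mul_field]
        exact hvA p hp x (Set.Ioo_subset_Icc_self hx)
      have hlv : σ p * deriv v (p - η) < 0 := by
        have h1 := hUleft p hp
        have h2 := hclose2 _ (hIoo (hJsub p hp (Set.left_mem_Icc.mpr hab.le)))
        have h3 := hεl p hp
        rcases hσcases p with h | h <;> rw [h] at h1 ⊢ <;>
          rcases abs_cases (deriv v (p - η) - deriv u (p - η)) with ⟨h5, _⟩ | ⟨h5, _⟩ <;>
          rcases abs_cases (deriv u (p - η)) with ⟨h6, _⟩ | ⟨h6, _⟩ <;> linarith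
      have hrv : 0 < σ p * deriv v (p + η) := by
        have h1 := hUright p hp
        have h2 := hclose2 _ (hIoo (hJsub p hp (Set.right_mem_Icc.mpr hab.le)))
        have h3 := hεr p hp
        rcases hσcases p with h | h <;> rw [h] at h1 ⊢ <;>
          rcases abs_cases (deriv v (p + η) - deriv u (p + η)) with ⟨h5, _⟩ | ⟨h5, _⟩ <;>
          rcases abs_cases (deriv u (p + η)) with ⟨h6, _⟩ | ⟨h6, _⟩ <;> linarith
      obtain ⟨⟨y, hy, hy0⟩, huniq⟩ := key_interval hab hconts hder hlv hrv
      refine ⟨y, fun _ => ⟨hy, ?_, ?_⟩⟩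
      · rcases mul_eq_zero.mp hy0 with h | h
        · exact absurd h (hσnz p)
        · exact h
      · intro z hz hz0
        exact huniq z hz (by rw [hz0, mul_zero]) y (Set.Ioo_subset_Icc_self hy) hy0
    · exact ⟨0, fun h => absurd h hp⟩
  choose yv hyv using hyex
  -- every zero of v' in the interior lies in one of the intervals
  have hzero_loc : ∀ x ∈ Set.Ioo (-1:ℝ) 1, deriv v x = 0 → ∃ p ∈ S, x ∈ Set.Ioo (p - η) (p + η) := by
    intro x hx h0
    by_cases hxU : x ∈ U
    · rw [hUdef, Set.mem_iUnion₂] at hxU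
      obtain ⟨p, hp, hmem⟩ := hxU
      exact ⟨p, hp, hmem⟩
    · exfalso
      have hxK : x ∈ K := ⟨hIoo hx, hxU⟩
      have h1 := hδle x hxK
      have h2 := hclose2 x (hIoo hx)
      rw [h0, zero_sub, abs_neg] at h2
      linarith
  have hzero_eq : ∀ x ∈ Set.Ioo (-1:ℝ) 1, deriv v x = 0 → ∃ p ∈ S, x = yv p := by
    intro x hx h0
    obtain ⟨p, hp, hmem⟩ := hzero_loc x hx h0
    exact ⟨p, hp, (hyv p hp).2.2 x (Set.Ioo_subset_Icc_self hmem) h0⟩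
  have hSveq : {x ∈ Set.Ioo (-1:ℝ) 1 | deriv v x = 0} = yv '' S := by
    apply Set.eq_of_subset_of_subset
    · intro x hx
      obtain ⟨p, hp, hxy⟩ := hzero_eq x hx.1 hx.2
      exact ⟨p, hp, hxy.symm⟩
    · rintro x ⟨p, hp, rfl⟩
      obtain ⟨hy, hy0, _⟩ := hyv p hp
      exact ⟨hJsub p hp (Set.Ioo_subset_Icc_self hy), hy0⟩
  have hinj : Set.InjOn yv S := by
    intro p hp q hq heq
    by_contra hne
    have h3 := hsep p hp q hq hne
    have hyp := (hyv p hp).1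
    have hyq := (hyv q hq).1
    rcases abs_cases (p - q) with ⟨h4, _⟩ | ⟨h4, _⟩ <;> rw [h4] at h3 <;>
      [linarith [hyp.1, hyq.2]; linarith [hyp.2, hyq.1]]
  refine ⟨hv, ne_of_gt hvm1, hvp1, hvm1, ?_, ?_, ?_, ?_⟩
  · -- nondegenerate critical points
    intro x hx h0 h2
    obtain ⟨p, hp, hmem⟩ := hzero_loc x hx h0
    have h1 := hvA p hp x (Set.Ioo_subset_Icc_self hmem)
    rw [h2, mul_zero] at h1
    exact lt_irrefl 0 h1
  · rw [hSveq]; exact hfin.image yv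
  · rw [hSveq, Set.ncard_image_of_injOn hinj]; exact hcard
  · -- zeros of v between consecutive critical points
    intro x hx y hy hxy hdx hdy hno
    obtain ⟨p, hp, rfl⟩ := hzero_eq x hx hdx
    obtain ⟨q, hq, rfl⟩ := hzero_eq y hy hdy
    have hyp := (hyv p hp).1
    have hyq := (hyv q hq).1
    have hpq : p < q := by
      rcases lt_trichotomy p q with h | h | h
      · exact h
      · exfalso; rw [h] at hxy; exact lt_irrefl _ hxy
      · exfalso
        have h3 := hsep p hp q hq (ne_of_gt h)
        rcases abs_cases (p - q) with ⟨h4, _⟩ | ⟨h4, _⟩ <;> rw [h4] at h3 <;>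
          linarith [hyp.1, hyp.2, hyq.1, hyq.2]
    have hCond : Cond p q := by
      refine ⟨hp, hq, hpq, fun z hz hz0 => ?_⟩
      have hzS : z ∈ S := ⟨⟨lt_trans (hSsub hp).1 hz.1, lt_trans hz.2 (hSsub hq).2⟩, hz0⟩
      have h3p := hsep p hp z hzS (ne_of_lt hz.1)
      have h3q := hsep z hzS q hq (ne_of_lt hz.2)
      have hyz := (hyv z hzS).1
      have hdz := (hyv z hzS).2.1
      refine hno (yv z) ⟨?_, ?_⟩ hdz
      · rcases abs_cases (p - z) with ⟨h4, _⟩ | ⟨h4, _⟩ <;> rw [h4] at h3p <;>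
          linarith [hyp.1, hyp.2, hyz.1, hyz.2, hz.1, hz.2]
      · rcases abs_cases (z - q) with ⟨h4, _⟩ | ⟨h4, _⟩ <;> rw [h4] at h3q <;>
          linarith [hyq.1, hyq.2, hyz.1, hyz.2, hz.1, hz.2]
    obtain ⟨hpa, hab, hbq, hprod⟩ := hpair p q hCond
    have hg := hηg p q hCond
    have he := hεe p q hCond
    have hpaI : pa p q ∈ Set.Icc (-1:ℝ) 1 :=
      hIoo ⟨lt_trans (hSsub hp).1 hpa, lt_trans (lt_trans hab hbq) (hSsub hq).2⟩
    have hpbI : pb p q ∈ Set.Icc (-1:ℝ) 1 :=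
      hIoo ⟨lt_trans (hSsub hp).1 (lt_trans hpa hab), lt_trans hbq (hSsub hq).2⟩
    have hva : v (pa p q) * v (pb p q) < 0 := by
      have h1 := hclose1 _ hpaI
      have h2 := hclose1 _ hpbI
      have hea : ε ≤ |u (pa p q)| := le_trans he (min_le_left _ _)
      have heb : ε ≤ |u (pb p q)| := le_trans he (min_le_right _ _)
      have hane : u (pa p q) ≠ 0 := fun h0 => by rw [h0, zero_mul] at hprod; exact lt_irrefl 0 hprod
      rcases hane.lt_or_gt with hA | hA
      · have hub : 0 < u (pb p q) := by nlinarith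
        have hva' : v (pa p q) < 0 := by
          rw [abs_of_neg hA] at hea
          linarith [(abs_lt.mp h1).2]
        have hvb' : 0 < v (pb p q) := by
          rw [abs_of_pos hub] at heb
          linarith [(abs_lt.mp h2).1]
        exact mul_neg_of_neg_of_pos hva' hvb'
      · have hub : u (pb p q) < 0 := by nlinarith
        have hva' : 0 < v (pa p q) := by
          rw [abs_of_pos hA] at hea
          linarith [(abs_lt.mp h1).1]
        have hvb' : v (pb p q) < 0 := by
          rw [abs_of_neg hub] at heb
          linarith [(abs_lt.mp h2).2]
        exact mul_neg_of_pos_of_neg hva' hvb'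
    obtain ⟨z, hz, hz0⟩ := sign_change_zero hab (hv.continuousOn.mono (Set.Icc_subset_Icc hpaI.1 hpbI.2)) hva
    refine ⟨z, ⟨?_, ?_⟩, hz0⟩
    · have h8 : η ≤ pa p q - p := le_trans hg (min_le_left _ _)
      have := hyp.2
      have := hz.1
      linarith
    · have h9 : η ≤ q - pb p q := le_trans hg (min_le_right _ _)
      have := hyq.1
      have := hz.2
      linarith


private lemma deriv_neg_fun (v : ℝ → ℝ) : deriv (-v) = -(deriv v) := by
  funext x
  exact deriv.neg

/-- Each `T_k^ν` is open in `C²[-1,1]` (w.r.t. the sup-type `C²` norm), and the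
sets `T_k^ν` for distinct `(k,ν)` are pairwise disjoint. -/
theorem stmt10 :
    (∀ (k : ℕ) (ν : Bool) (u : ℝ → ℝ), TNodal k ν u →
      ∃ ε > 0, ∀ v : ℝ → ℝ, ContDiffOn ℝ 2 v (Set.Icc (-1 : ℝ) 1) →
        (∀ x ∈ Set.Icc (-1 : ℝ) 1,
          |v x - u x| < ε ∧ |deriv v x - deriv u x| < ε ∧
          |deriv (deriv v) x - deriv (deriv u) x| < ε) →
        TNodal k ν v) ∧
    (∀ (k k' : ℕ) (ν ν' : Bool) (u : ℝ → ℝ), (k, ν) ≠ (k', ν') →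
      TNodal k ν u → ¬ TNodal k' ν' u) := by
  constructor
  · intro k ν u hu
    cases ν with
    | true =>
      simp only [TNodal, if_true] at hu ⊢
      exact tplus_open k u hu
    | false =>
      simp only [TNodal, Bool.false_eq_true, if_false] at hu ⊢
      obtain ⟨ε, hε, hP⟩ := tplus_open k (-u) hu
      refine ⟨ε, hε, ?_⟩
      intro v hv hclose
      refine hP (-v) hv.neg ?_
      intro x hx
      obtain ⟨h1, h2, h3⟩ := hclose x hx
      refine ⟨?_, ?_, ?_⟩
      · simpa [abs_sub_comm, neg_add_eq_sub] using h1
      · rw [deriv_neg_fun, deriv_neg_fun]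
        simpa [abs_sub_comm, neg_add_eq_sub] using h2
      · rw [deriv_neg_fun, deriv_neg_fun, deriv_neg_fun, deriv_neg_fun]
        simpa [abs_sub_comm, neg_add_eq_sub] using h3
  · intro k k' ν ν' u hne h h'
    have hsign : ∀ (a b : ℕ) (f : ℝ → ℝ), TPlus a f → TPlus b (-f) → False := by
      intro a b f hf hg
      have h1 : 0 < deriv f (-1) := hf.2.2.2.1
      have h2 : 0 < deriv (-f) (-1) := hg.2.2.2.1
      rw [deriv_neg_fun] at h2
      simp only [Pi.neg_apply] at h2
      linarith
    have hcardeq : ∀ (a b : ℕ) (f : ℝ → ℝ), TPlus a f → TPlus b f → a = b := by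
      intro a b f hf hg
      rw [← hf.2.2.2.2.2.2.1, ← hg.2.2.2.2.2.2.1]
    cases ν with
    | true =>
      cases ν' with
      | true =>
        simp only [TNodal, if_true] at h h'
        exact hne (by rw [hcardeq k k' u h h'])
      | false =>
        simp only [TNodal, Bool.false_eq_true, if_false, if_true] at h h'
        exact hsign k k' u h h'
    | false =>
      cases ν' with
      | true =>
        simp only [TNodal, Bool.false_eq_true, if_false, if_true] at h h'
        exact hsign k' k u h' h
      | false =>
        simp only [TNodal, Bool.false_eq_true, if_false] at h h'
        exact hne (by rw [hcardeq k k' (-u) h h'])
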